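/- arXiv:math/9808012 — 4 statements merged into one kernel-verified Lean document; each statement's English description precedes it below -/
import Mathlib

section
/- Fast Function Factor Lemma: Let κ be a cardinal, let γ < κ be an inaccessible cardinal, let α < κ be an ordinal, and let λ be the least inaccessible cardinal greater than both γ and α; assume λ < κ. Then p = {⟨γ,α⟩} is a condition in F_κ, and the map q ↦ (q↾γ, q↾[λ,κ)) is an order isomorphism from the cone F_κ↾p = {q ∈ F_κ : q ≤ p} onto the product poset F_γ × F_{λ,κ}. In particular, every q ≤ p satisfies dom(q) ∩ (γ, λ) = ∅ and q(γ) = α. -/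
open Cardinal Set

/-- An ordinal is (the ordinal of) an inaccessible cardinal. -/
def OrdInacc (o : Ordinal.{0}) : Prop := ∃ c : Cardinal.{0}, c.IsInaccessible ∧ c.ord = o

/-- `p` is a condition in the fast function forcing poset `F_κ`: a partial function
from `κ` to `κ` (coded as a functional set of ordered pairs) whose domain is a
set of inaccessible cardinals below `κ` of size less than `κ`, and such that for
every `γ` in its domain, `p '' γ ⊆ γ` and `|p ↾ γ| < γ`. -/
def IsFastCond (κ : Cardinal.{0}) (p : Set (Ordinal.{0} × Ordinal.{0})) : Prop :=
  (∀ a b b', (a, b) ∈ p → (a, b') ∈ p → b = b') ∧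
  (∀ a b, (a, b) ∈ p → a < κ.ord ∧ b < κ.ord) ∧
  (∀ a b, (a, b) ∈ p → OrdInacc a) ∧
  #{a : Ordinal.{0} | ∃ b, (a, b) ∈ p} < Cardinal.lift.{1, 0} κ ∧
  (∀ γ c, (γ, c) ∈ p →
    (∀ a b, (a, b) ∈ p → a < γ → b < γ) ∧
    #{x : Ordinal.{0} × Ordinal.{0} | x ∈ p ∧ x.1 < γ} < Cardinal.lift.{1, 0} γ.card)

/-- `p` is a condition in `F_{lo,κ}`, the fast function poset on `κ` restricted to
conditions with domain contained in `[lo, κ)`. -/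
def IsFastTailCond (lo : Ordinal.{0}) (κ : Cardinal.{0})
    (p : Set (Ordinal.{0} × Ordinal.{0})) : Prop :=
  IsFastCond κ p ∧ ∀ a b, (a, b) ∈ p → lo ≤ a

/-!
If `q ≤ {⟨γ, α⟩}` and `a > γ` lies in `dom q`, fastness of `q` at `a` gives `α = q(γ) < a`,
so `a` is an inaccessible above both `γ` and `α` and therefore `a ≥ λ`. Hence every such `q`
is the disjoint union `q↾γ ∪ {⟨γ, α⟩} ∪ q↾[λ,κ)`. Conversely, such a union of conditions is
again a condition: each point of the upper part lies above the domain and range of the lower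
part, which is smaller than that point.
-/

lemma OrdInacc.aleph0_le_card {a : Ordinal.{0}} (h : OrdInacc a) : ℵ₀ ≤ a.card := by
  obtain ⟨c, hc, rfl⟩ := h
  rw [card_ord]
  exact hc.aleph0_lt.le

lemma mk_dom_eq_mk {p : Set (Ordinal.{0} × Ordinal.{0})}
    (hfun : ∀ a b b', (a, b) ∈ p → (a, b') ∈ p → b = b') :
    #{a : Ordinal.{0} | ∃ b, (a, b) ∈ p} = #p := by
  have hdom : {a : Ordinal.{0} | ∃ b, (a, b) ∈ p} = Prod.fst '' p := by ext; simp
  rw [hdom, mk_image_eq_of_injOn]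
  rintro ⟨a, b⟩ hb ⟨a', b'⟩ hb' (rfl : a = a')
  rw [hfun a b b' hb hb']

namespace IsFastCond

variable {κ : Cardinal.{0}} {p q : Set (Ordinal.{0} × Ordinal.{0})}

theorem singleton {γ : Cardinal.{0}} {α : Ordinal.{0}} (hγ : γ.IsInaccessible) (hγκ : γ < κ)
    (hα : α < κ.ord) : IsFastCond κ {(γ.ord, α)} := by
  have hfun : ∀ a b b', (a, b) ∈ ({(γ.ord, α)} : Set _) →
      (a, b') ∈ ({(γ.ord, α)} : Set _) → b = b' := by
    rintro a b b' ⟨-, rfl⟩ ⟨-, rfl⟩; rfl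
  have hγ₀ : ℵ₀ ≤ lift.{1} γ := aleph0_le_lift.2 hγ.aleph0_lt.le
  refine ⟨hfun, ?_, ?_, ?_, ?_⟩
  · rintro a b ⟨rfl, rfl⟩; exact ⟨ord_lt_ord.2 hγκ, hα⟩
  · rintro a b ⟨rfl, -⟩; exact ⟨γ, hγ, rfl⟩
  · rw [mk_dom_eq_mk hfun, mk_singleton]
    exact one_lt_aleph0.trans_le (hγ₀.trans (lift_le.2 hγκ.le))
  · rintro a c ⟨rfl, -⟩
    refine ⟨fun _ _ h hlt => absurd ((Prod.mk.inj h).1 ▸ hlt) (lt_irrefl _), ?_⟩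
    rw [card_ord]
    refine (mk_le_mk_of_subset fun x hx => hx.1).trans_lt ?_
    rw [mk_singleton]
    exact one_lt_aleph0.trans_le hγ₀

theorem mono {κ' : Cardinal.{0}} (hp : IsFastCond κ p) (hκ : κ ≤ κ') : IsFastCond κ' p := by
  obtain ⟨hfun, hbd, hinacc, hdom, hfast⟩ := hp
  refine ⟨hfun, fun a b h => ?_, hinacc, hdom.trans_le (lift_le.2 hκ), hfast⟩
  exact (hbd a b h).imp (·.trans_le (ord_le_ord.2 hκ)) (·.trans_le (ord_le_ord.2 hκ))

theorem subset (hq : IsFastCond κ q) (hpq : p ⊆ q) : IsFastCond κ p := by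
  obtain ⟨hfun, hbd, hinacc, hdom, hfast⟩ := hq
  refine ⟨fun a b b' h h' => hfun a b b' (hpq h) (hpq h'), fun a b h => hbd a b (hpq h),
    fun a b h => hinacc a b (hpq h), ?_, fun γ c h => ?_⟩
  · exact (mk_le_mk_of_subset (by rintro a ⟨b, hb⟩; exact ⟨b, hpq hb⟩)).trans_lt hdom
  · refine ⟨fun a b hab => (hfast γ c (hpq h)).1 a b (hpq hab), ?_⟩
    exact (mk_le_mk_of_subset (by rintro x ⟨hx, hlt⟩; exact ⟨hpq hx, hlt⟩)).trans_lt
      (hfast γ c (hpq h)).2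

theorem restrict_lt {γ : Cardinal.{0}} {c : Ordinal.{0}} (hq : IsFastCond κ q)
    (hγ : (γ.ord, c) ∈ q) : IsFastCond γ {x ∈ q | x.1 < γ.ord} := by
  obtain ⟨hfun, -, hinacc, -, hfast⟩ := hq.subset (sep_subset q _)
  obtain ⟨hbelow, hcard⟩ := hq.2.2.2.2 γ.ord c hγ
  rw [card_ord] at hcard
  refine ⟨hfun, fun a b h => ⟨h.2, hbelow a b h.1 h.2⟩, hinacc, ?_, hfast⟩
  rw [mk_dom_eq_mk hfun]
  exact hcard

theorem restrict_ge (hq : IsFastCond κ q) (lo : Ordinal.{0}) :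
    IsFastTailCond lo κ {x ∈ q | lo ≤ x.1} :=
  ⟨hq.subset (sep_subset q _), fun _ _ h => h.2⟩

theorem union (hκ : ℵ₀ ≤ κ) (hp : IsFastCond κ p) (hq : IsFastCond κ q)
    (hsep : ∀ x ∈ p, ∀ y ∈ q, x.1 < y.1 ∧ x.2 < y.1)
    (hcard : ∀ y ∈ q, #p < lift.{1} y.1.card) : IsFastCond κ (p ∪ q) := by
  obtain ⟨pfun, pbd, pinacc, pdom, pfast⟩ := hp
  obtain ⟨qfun, qbd, qinacc, qdom, qfast⟩ := hq
  refine ⟨?_, fun a b h => h.elim (pbd a b) (qbd a b),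
    fun a b h => h.elim (pinacc a b) (qinacc a b), ?_, fun γ c h => ?_⟩
  · rintro a b b' (h | h) (h' | h')
    · exact pfun a b b' h h'
    · exact absurd (hsep _ h _ h').1 (lt_irrefl a)
    · exact absurd (hsep _ h' _ h).1 (lt_irrefl a)
    · exact qfun a b b' h h'
  · have hdom : {a : Ordinal.{0} | ∃ b, (a, b) ∈ p ∪ q} =
        {a | ∃ b, (a, b) ∈ p} ∪ {a | ∃ b, (a, b) ∈ q} := by
      ext; exact exists_or
    rw [hdom]
    exact (mk_union_le _ _).trans_lt (add_lt_of_lt (aleph0_le_lift.2 hκ) pdom qdom)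
  rcases h with h | h
  · have hbelow : {x | x ∈ p ∪ q ∧ x.1 < γ} = {x | x ∈ p ∧ x.1 < γ} := by
      ext x
      refine and_congr_left fun hlt => or_iff_left fun hx => ?_
      exact absurd ((hsep _ h _ hx).1.trans hlt) (lt_irrefl γ)
    refine ⟨fun a b hab hlt => ?_, hbelow ▸ (pfast γ c h).2⟩
    rcases hab with hab | hab
    · exact (pfast γ c h).1 a b hab hlt
    · exact absurd ((hsep _ h _ hab).1.trans hlt) (lt_irrefl γ)
  · refine ⟨fun a b hab hlt => hab.elim (fun hab => (hsep _ hab _ h).2)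
      (fun hab => (qfast γ c h).1 a b hab hlt), ?_⟩
    have hγ : ℵ₀ ≤ lift.{1} γ.card := aleph0_le_lift.2 (qinacc γ c h).aleph0_le_card
    have hsub : {x | x ∈ p ∪ q ∧ x.1 < γ} ⊆ p ∪ {x | x ∈ q ∧ x.1 < γ} := by
      rintro x ⟨hx | hx, hlt⟩
      exacts [Or.inl hx, Or.inr ⟨hx, hlt⟩]
    exact (mk_le_mk_of_subset hsub).trans_lt <| (mk_union_le _ _).trans_lt <|
      add_lt_of_lt hγ (hcard _ h) (qfast γ c h).2

end IsFastCond

section Cone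

variable {κ γ lam : Cardinal.{0}} {α : Ordinal.{0}} {q q' : Set (Ordinal.{0} × Ordinal.{0})}

theorem IsFastCond.ord_le_of_lt (hq : IsFastCond κ q) (hγα : (γ.ord, α) ∈ q)
    (hmin : ∀ μ : Cardinal.{0}, μ.IsInaccessible → γ < μ → α < μ.ord → lam ≤ μ)
    {x : Ordinal.{0} × Ordinal.{0}} (hx : x ∈ q) (hlt : γ.ord < x.1) : lam.ord ≤ x.1 := by
  obtain ⟨-, -, hinacc, -, hfast⟩ := hq
  obtain ⟨μ, hμ, hμx⟩ := hinacc x.1 x.2 hx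
  have hαx : α < x.1 := (hfast x.1 x.2 hx).1 γ.ord α hγα hlt
  rw [← hμx] at hlt hαx ⊢
  exact ord_le_ord.2 (hmin μ hμ (ord_lt_ord.1 hlt) hαx)

theorem IsFastCond.eq_union_of_mem (hq : IsFastCond κ q) (hγα : (γ.ord, α) ∈ q)
    (hmin : ∀ μ : Cardinal.{0}, μ.IsInaccessible → γ < μ → α < μ.ord → lam ≤ μ) :
    q = {x ∈ q | x.1 < γ.ord} ∪ {(γ.ord, α)} ∪ {x ∈ q | lam.ord ≤ x.1} := by
  refine Subset.antisymm (fun x hx => ?_) (union_subset (union_subset (sep_subset _ _)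
    (singleton_subset_iff.2 hγα)) (sep_subset _ _))
  rcases lt_trichotomy x.1 γ.ord with hlt | heq | hgt
  · exact Or.inl (Or.inl ⟨hx, hlt⟩)
  · refine Or.inl (Or.inr (Prod.ext heq (hq.1 _ _ _ ?_ hγα)))
    rw [← heq]
    exact hx
  · exact Or.inr ⟨hx, hq.ord_le_of_lt hγα hmin hx hgt⟩

theorem IsFastCond.subset_iff_of_mem (hq : IsFastCond κ q) (hγα : (γ.ord, α) ∈ q)
    (hγα' : (γ.ord, α) ∈ q')
    (hmin : ∀ μ : Cardinal.{0}, μ.IsInaccessible → γ < μ → α < μ.ord → lam ≤ μ) :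
    q ⊆ q' ↔ ({x ∈ q | x.1 < γ.ord} ⊆ {x ∈ q' | x.1 < γ.ord} ∧
      {x ∈ q | lam.ord ≤ x.1} ⊆ {x ∈ q' | lam.ord ≤ x.1}) := by
  refine ⟨fun h => ⟨fun x hx => ⟨h hx.1, hx.2⟩, fun x hx => ⟨h hx.1, hx.2⟩⟩,
    fun ⟨hlt, hge⟩ => ?_⟩
  rw [hq.eq_union_of_mem hγα hmin]
  exact union_subset (union_subset (hlt.trans (sep_subset _ _))
    (singleton_subset_iff.2 hγα')) (hge.trans (sep_subset _ _))

end Cone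

section Glue

variable {κ γ lam : Cardinal.{0}} {α : Ordinal.{0}}
  {q₁ q₂ : Set (Ordinal.{0} × Ordinal.{0})}

theorem IsFastCond.glue (hγ : γ.IsInaccessible) (hγκ : γ < κ) (hα : α < κ.ord)
    (hγlam : γ < lam) (hαlam : α < lam.ord) (h₁ : IsFastCond γ q₁)
    (h₂ : IsFastTailCond lam.ord κ q₂) : IsFastCond κ (q₁ ∪ {(γ.ord, α)} ∪ q₂) := by
  have hκ : ℵ₀ ≤ κ := hγ.aleph0_lt.le.trans hγκ.le
  have hq₁ : #q₁ < lift.{1} γ := mk_dom_eq_mk h₁.1 ▸ h₁.2.2.2.1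
  have hγlam' : γ.ord < lam.ord := ord_lt_ord.2 hγlam
  have hlow : ∀ x ∈ q₁ ∪ {(γ.ord, α)}, x.1 < lam.ord ∧ x.2 < lam.ord := by
    rintro x (hx | rfl)
    · exact (h₁.2.1 x.1 x.2 hx).imp (·.trans hγlam') (·.trans hγlam')
    · exact ⟨hγlam', hαlam⟩
  refine ((h₁.mono hγκ.le).union hκ (.singleton hγ hγκ hα) ?_ ?_).union hκ h₂.1 ?_ ?_
  · rintro x hx _ rfl
    exact h₁.2.1 x.1 x.2 hx
  · rintro _ rfl
    rwa [card_ord]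
  · intro x hx y hy
    exact (hlow x hx).imp (·.trans_le (h₂.2 y.1 y.2 hy)) (·.trans_le (h₂.2 y.1 y.2 hy))
  · intro y hy
    have hy₀ : ℵ₀ ≤ lift.{1} y.1.card :=
      aleph0_le_lift.2 (h₂.1.2.2.1 y.1 y.2 hy).aleph0_le_card
    have hγy : lift.{1} γ ≤ lift.{1} y.1.card := by
      rw [lift_le, ← card_ord γ]
      exact Ordinal.card_le_card (hγlam'.le.trans (h₂.2 y.1 y.2 hy))
    refine (mk_union_le _ _).trans_lt (add_lt_of_lt hy₀ (hq₁.trans_le hγy) ?_)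
    rw [mk_singleton]
    exact one_lt_aleph0.trans_le hy₀

theorem sep_fst_lt_glue (hγlam : γ < lam) (h₁ : IsFastCond γ q₁)
    (h₂ : IsFastTailCond lam.ord κ q₂) :
    {x ∈ q₁ ∪ {(γ.ord, α)} ∪ q₂ | x.1 < γ.ord} = q₁ := by
  refine Subset.antisymm ?_ fun x hx => ⟨Or.inl (Or.inl hx), (h₁.2.1 x.1 x.2 hx).1⟩
  rintro x ⟨(hx | rfl) | hx, hlt⟩
  · exact hx
  · exact absurd hlt (lt_irrefl _)
  · exact absurd ((ord_lt_ord.2 hγlam).trans_le (h₂.2 x.1 x.2 hx)) hlt.not_gt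

theorem sep_le_fst_glue (hγlam : γ < lam) (h₁ : IsFastCond γ q₁)
    (h₂ : IsFastTailCond lam.ord κ q₂) :
    {x ∈ q₁ ∪ {(γ.ord, α)} ∪ q₂ | lam.ord ≤ x.1} = q₂ := by
  refine Subset.antisymm ?_ fun x hx => ⟨Or.inr hx, h₂.2 x.1 x.2 hx⟩
  rintro x ⟨(hx | rfl) | hx, hle⟩
  · exact absurd ((h₁.2.1 x.1 x.2 hx).1.trans (ord_lt_ord.2 hγlam)) hle.not_gt
  · exact absurd (ord_lt_ord.2 hγlam) hle.not_gt
  · exact hx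

end Glue

theorem fast_function_factor_lemma_general
    (κ γ lam : Cardinal.{0}) (α : Ordinal.{0})
    (hγ : γ.IsInaccessible) (hγκ : γ < κ) (hα : α < κ.ord)
    (hlam : lam.IsInaccessible ∧ γ < lam ∧ α < lam.ord ∧
      ∀ μ : Cardinal.{0}, μ.IsInaccessible → γ < μ → α < μ.ord → lam ≤ μ) :
    -- `p = {⟨γ, α⟩}` is a condition in `F_κ`
    IsFastCond κ {(γ.ord, α)} ∧
    -- the map is well defined into `F_γ × F_{λ,κ}`
    (∀ q, IsFastCond κ q → {(γ.ord, α)} ⊆ q →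
      IsFastCond γ {x ∈ q | x.1 < γ.ord} ∧
      IsFastTailCond lam.ord κ {x ∈ q | lam.ord ≤ x.1}) ∧
    -- it is order preserving in both directions (`q' ≤ q` iff the images are
    -- componentwise below each other; recall `q' ≤ q` means `q ⊆ q'`)
    (∀ q q', IsFastCond κ q → {(γ.ord, α)} ⊆ q →
      IsFastCond κ q' → {(γ.ord, α)} ⊆ q' →
      (q ⊆ q' ↔ ({x ∈ q | x.1 < γ.ord} ⊆ {x ∈ q' | x.1 < γ.ord} ∧
                 {x ∈ q | lam.ord ≤ x.1} ⊆ {x ∈ q' | lam.ord ≤ x.1}))) ∧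
    -- it is injective on the cone below `p`
    (∀ q q', IsFastCond κ q → {(γ.ord, α)} ⊆ q →
      IsFastCond κ q' → {(γ.ord, α)} ⊆ q' →
      {x ∈ q | x.1 < γ.ord} = {x ∈ q' | x.1 < γ.ord} →
      {x ∈ q | lam.ord ≤ x.1} = {x ∈ q' | lam.ord ≤ x.1} → q = q') ∧
    -- it is surjective onto `F_γ × F_{λ,κ}`
    (∀ q₁ q₂, IsFastCond γ q₁ → IsFastTailCond lam.ord κ q₂ →
      ∃ q, IsFastCond κ q ∧ {(γ.ord, α)} ⊆ q ∧
        {x ∈ q | x.1 < γ.ord} = q₁ ∧ {x ∈ q | lam.ord ≤ x.1} = q₂) ∧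
    -- in particular: domain disjoint from `(γ, λ)` and `q(γ) = α`
    (∀ q, IsFastCond κ q → {(γ.ord, α)} ⊆ q →
      (∀ a b, (a, b) ∈ q → ¬(γ.ord < a ∧ a < lam.ord)) ∧
      (∀ b, (γ.ord, b) ∈ q → b = α)) := by
  obtain ⟨-, hγlam, hαlam, hmin⟩ := hlam
  simp only [singleton_subset_iff]
  refine ⟨.singleton hγ hγκ hα, fun q hq hγα => ⟨hq.restrict_lt hγα, hq.restrict_ge _⟩,
    fun q q' hq hγα _ hγα' => hq.subset_iff_of_mem hγα hγα' hmin, ?_, ?_, ?_⟩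
  · intro q q' hq hγα hq' hγα' hlt hge
    exact (hq.subset_iff_of_mem hγα hγα' hmin).2 ⟨hlt.subset, hge.subset⟩ |>.antisymm
      ((hq'.subset_iff_of_mem hγα' hγα hmin).2 ⟨hlt.symm.subset, hge.symm.subset⟩)
  · intro q₁ q₂ h₁ h₂
    exact ⟨_, h₁.glue hγ hγκ hα hγlam hαlam h₂, Or.inl (Or.inr rfl),
      sep_fst_lt_glue hγlam h₁ h₂, sep_le_fst_glue hγlam h₁ h₂⟩
  · intro q hq hγα
    refine ⟨fun a b hab ⟨hγa, halam⟩ => ?_, fun b hb => hq.1 _ _ _ hb hγα⟩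
    exact (hq.ord_le_of_lt hγα hmin (x := (a, b)) hab hγa).not_gt halam

/-- **Fast Function Factor Lemma.**  Below the condition `p = {⟨γ, α⟩}`, where `γ` is
inaccessible and `λ` is the least inaccessible above both `γ` and `α` (with `λ < κ`),
the poset `F_κ ↾ p` is isomorphic to `F_γ × F_{λ,κ}` via `q ↦ (q ↾ γ, q ↾ [λ,κ))`:
the map is well defined, an order isomorphism (order-preserving in both directions,
injective and surjective); in particular every `q ≤ p` has domain disjoint from the
interval `(γ, λ)` and satisfies `q(γ) = α`. -/
theorem fast_function_factor_lemma
    (κ γ lam : Cardinal.{0}) (α : Ordinal.{0})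
    (hγ : γ.IsInaccessible) (hγκ : γ < κ) (hα : α < κ.ord)
    (hlam : lam.IsInaccessible ∧ γ < lam ∧ α < lam.ord ∧
      ∀ μ : Cardinal.{0}, μ.IsInaccessible → γ < μ → α < μ.ord → lam ≤ μ)
    (hlamκ : lam < κ) :
    -- `p = {⟨γ, α⟩}` is a condition in `F_κ`
    IsFastCond κ {(γ.ord, α)} ∧
    -- the map is well defined into `F_γ × F_{λ,κ}`
    (∀ q, IsFastCond κ q → {(γ.ord, α)} ⊆ q →
      IsFastCond γ {x ∈ q | x.1 < γ.ord} ∧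
      IsFastTailCond lam.ord κ {x ∈ q | lam.ord ≤ x.1}) ∧
    -- it is order preserving in both directions (`q' ≤ q` iff the images are
    -- componentwise below each other; recall `q' ≤ q` means `q ⊆ q'`)
    (∀ q q', IsFastCond κ q → {(γ.ord, α)} ⊆ q →
      IsFastCond κ q' → {(γ.ord, α)} ⊆ q' →
      (q ⊆ q' ↔ ({x ∈ q | x.1 < γ.ord} ⊆ {x ∈ q' | x.1 < γ.ord} ∧
                 {x ∈ q | lam.ord ≤ x.1} ⊆ {x ∈ q' | lam.ord ≤ x.1}))) ∧
    -- it is injective on the cone below `p`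
    (∀ q q', IsFastCond κ q → {(γ.ord, α)} ⊆ q →
      IsFastCond κ q' → {(γ.ord, α)} ⊆ q' →
      {x ∈ q | x.1 < γ.ord} = {x ∈ q' | x.1 < γ.ord} →
      {x ∈ q | lam.ord ≤ x.1} = {x ∈ q' | lam.ord ≤ x.1} → q = q') ∧
    -- it is surjective onto `F_γ × F_{λ,κ}`
    (∀ q₁ q₂, IsFastCond γ q₁ → IsFastTailCond lam.ord κ q₂ →
      ∃ q, IsFastCond κ q ∧ {(γ.ord, α)} ⊆ q ∧
        {x ∈ q | x.1 < γ.ord} = q₁ ∧ {x ∈ q | lam.ord ≤ x.1} = q₂) ∧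
    -- in particular: domain disjoint from `(γ, λ)` and `q(γ) = α`
    (∀ q, IsFastCond κ q → {(γ.ord, α)} ⊆ q →
      (∀ a b, (a, b) ∈ q → ¬(γ.ord < a ∧ a < lam.ord)) ∧
      (∀ b, (γ.ord, b) ∈ q → b = α)) :=
  fast_function_factor_lemma_general κ γ lam α hγ hγκ hα hlam
end

section
/- Let κ be a regular cardinal and let λ < κ be an infinite cardinal. Then the poset F_{λ,κ} is ≤λ-directed closed: every downward-directed subset D of F_{λ,κ} of cardinality at most λ has a lower bound in F_{λ,κ}; indeed, the union ⋃D is itself a condition in F_{λ,κ} extending every member of D. -/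
open Cardinal Set

/-! Any two pairs of `⋃D` lie in a common member of the directed family `D`, so `⋃D` is a
function satisfying `p '' γ ⊆ γ`, and `⋃D ↾ γ` is covered by the restrictions `r ↾ γ` of
members `r ∈ D` with `γ ∈ dom r`. The size bounds are then unions of fewer than `κ`
(resp. `γ`) small sets, small by regularity. For `γ` this needs `|D| < γ`: in `F_{λ,κ}`
domains start at `λ`, so `⋃D ↾ γ` is empty unless `λ < γ`. -/

universe u

section Directed

variable {α : Type*} {D : Set (Set α)}

lemma DirectedOn.exists_mem_of_mem_sUnion (hdir : DirectedOn (· ⊆ ·) D) {x y : α}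
    (hx : x ∈ ⋃₀ D) (hy : y ∈ ⋃₀ D) : ∃ r ∈ D, x ∈ r ∧ y ∈ r := by
  obtain ⟨p, hp, hxp⟩ := hx
  obtain ⟨q, hq, hyq⟩ := hy
  obtain ⟨r, hr, hpr, hqr⟩ := hdir p hp q hq
  exact ⟨r, hr, hpr hxp, hqr hyq⟩

lemma DirectedOn.mk_sUnion_inter_lt {c : Cardinal} (hc : c.IsRegular)
    (hdir : DirectedOn (· ⊆ ·) D) (hD : #D < c) {s : Set α} {y : α} (hy : y ∈ ⋃₀ D)
    (h : ∀ r ∈ D, y ∈ r → #↑(r ∩ s) < c) : #↑(⋃₀ D ∩ s) < c := by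
  obtain ⟨p, hp, hyp⟩ := hy
  rw [sUnion_eq_biUnion, iUnion₂_inter, card_biUnion_lt_iff_forall_of_isRegular hc hD]
  intro q hq
  obtain ⟨r, hr, hpr, hqr⟩ := hdir p hp q hq
  exact (mk_le_mk_of_subset (inter_subset_inter_left s hqr)).trans_lt (h r hr (hpr hyp))

end Directed

lemma OrdInacc.isRegular_card {γ : Ordinal.{0}} (h : OrdInacc γ) : γ.card.IsRegular := by
  obtain ⟨c, hc, rfl⟩ := h
  simpa using hc.isRegular

lemma OrdInacc.lt_card_of_ord_lt {γ : Ordinal.{0}} (h : OrdInacc γ) {c : Cardinal.{0}}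
    (hc : c.ord < γ) : c < γ.card := by
  obtain ⟨d, -, rfl⟩ := h
  simpa using hc

lemma mk_dom_sUnion_lt {α β : Type u} {c : Cardinal} (hc : c.IsRegular) {D : Set (Set (α × β))}
    (hD : #D < c) (h : ∀ p ∈ D, #{a | ∃ b, (a, b) ∈ p} < c) :
    #{a | ∃ b, (a, b) ∈ ⋃₀ D} < c := by
  have hdom : {a | ∃ b, (a, b) ∈ ⋃₀ D} = ⋃ p ∈ D, {a | ∃ b, (a, b) ∈ p} := by
    ext a
    simp only [mem_sUnion, mem_iUnion]
    exact ⟨fun ⟨b, p, hp, hab⟩ => ⟨p, hp, b, hab⟩, fun ⟨p, hp, b, hab⟩ => ⟨b, p, hp, hab⟩⟩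
  rw [hdom, card_biUnion_lt_iff_forall_of_isRegular hc hD]
  exact h

theorem IsFastCond.sUnion {κ : Cardinal.{0}} {D : Set (Set (Ordinal.{0} × Ordinal.{0}))}
    (hκ : κ.IsRegular) (hD : ∀ p ∈ D, IsFastCond κ p) (hdir : DirectedOn (· ⊆ ·) D)
    (hsize : #D < lift.{1} κ)
    (hbelow : ∀ γ c, (γ, c) ∈ ⋃₀ D → ∀ x ∈ ⋃₀ D, x.1 < γ → #D < lift.{1} γ.card) :
    IsFastCond κ (⋃₀ D) := by
  refine ⟨?_, ?_, ?_, mk_dom_sUnion_lt hκ.lift hsize fun p hp => (hD p hp).2.2.2.1, ?_⟩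
  · intro a b b' hb hb'
    obtain ⟨r, hr, hbr, hbr'⟩ := hdir.exists_mem_of_mem_sUnion hb hb'
    exact (hD r hr).1 a b b' hbr hbr'
  · rintro a b ⟨p, hp, hab⟩
    exact (hD p hp).2.1 a b hab
  · rintro a b ⟨p, hp, hab⟩
    exact (hD p hp).2.2.1 a b hab
  intro γ c hγ
  constructor
  · intro a b hab hlt
    obtain ⟨r, hr, hγr, habr⟩ := hdir.exists_mem_of_mem_sUnion hγ hab
    exact ((hD r hr).2.2.2.2 γ c hγr).1 a b habr hlt
  have hreg : (lift.{1} γ.card).IsRegular := by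
    obtain ⟨p, hp, hγp⟩ := hγ
    exact ((hD p hp).2.2.1 γ c hγp).isRegular_card.lift
  change #↑(⋃₀ D ∩ {x | x.1 < γ}) < _
  rcases (⋃₀ D ∩ {x | x.1 < γ}).eq_empty_or_nonempty with hempty | ⟨x, hx, hxγ⟩
  · rw [hempty, mk_eq_zero]
    exact aleph0_pos.trans_le hreg.aleph0_le
  exact hdir.mk_sUnion_inter_lt hreg (hbelow γ c hγ x hx hxγ) hγ fun r hr hγr =>
    ((hD r hr).2.2.2.2 γ c hγr).2

theorem fast_tail_directed_closed_general
    (κ lam : Cardinal.{0}) (hκ : κ.IsRegular) (hlamκ : lam < κ)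
    (D : Set (Set (Ordinal.{0} × Ordinal.{0})))
    (hD : ∀ p ∈ D, IsFastTailCond lam.ord κ p)
    (hdir : ∀ p ∈ D, ∀ q ∈ D, ∃ r ∈ D, p ⊆ r ∧ q ⊆ r)
    (hsize : #D ≤ Cardinal.lift.{1, 0} lam) :
    IsFastTailCond lam.ord κ (⋃₀ D) ∧ ∀ p ∈ D, p ⊆ ⋃₀ D := by
  have hbelow : ∀ γ c, (γ, c) ∈ ⋃₀ D → ∀ x ∈ ⋃₀ D, x.1 < γ → #D < lift.{1} γ.card := by
    rintro γ c ⟨p, hp, hγp⟩ x ⟨q, hq, hxq⟩ hxγ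
    have hlamγ : lam < γ.card := ((hD p hp).1.2.2.1 γ c hγp).lt_card_of_ord_lt
      (((hD q hq).2 x.1 x.2 hxq).trans_lt hxγ)
    exact hsize.trans_lt (lift_lt.2 hlamγ)
  refine ⟨⟨IsFastCond.sUnion hκ (fun p hp => (hD p hp).1) hdir
    (hsize.trans_lt (lift_lt.2 hlamκ)) hbelow, ?_⟩, fun p hp => subset_sUnion_of_mem hp⟩
  rintro a b ⟨p, hp, hab⟩
  exact (hD p hp).2 a b hab

/-- For a regular cardinal `κ` and an infinite cardinal `λ < κ`, the tail fast function
forcing `F_{λ,κ}` is `≤λ`-directed closed: any downward-directed family `D` of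
conditions (conditions are ordered by `q ≤ p ↔ p ⊆ q`) of size at most `λ` has a
lower bound; indeed the union `⋃₀ D` is itself a condition extending every member
of `D`. -/
theorem fast_tail_directed_closed
    (κ lam : Cardinal.{0}) (hκ : κ.IsRegular) (hlam : ℵ₀ ≤ lam) (hlamκ : lam < κ)
    (D : Set (Set (Ordinal.{0} × Ordinal.{0})))
    (hD : ∀ p ∈ D, IsFastTailCond lam.ord κ p)
    (hdir : ∀ p ∈ D, ∀ q ∈ D, ∃ r ∈ D, p ⊆ r ∧ q ⊆ r)
    (hsize : #D ≤ Cardinal.lift.{1, 0} lam) :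
    IsFastTailCond lam.ord κ (⋃₀ D) ∧ ∀ p ∈ D, p ⊆ ⋃₀ D :=
  fast_tail_directed_closed_general κ lam hκ hlamκ D hD hdir hsize
end

section
/- Let κ be a regular uncountable cardinal and let F be a κ-complete proper filter on κ. Then the long Prikry poset Q_F is <κ-directed closed: every downward-directed subset D of Q_F of cardinality less than κ has a lower bound in Q_F. -/
/-!
The lower bound is `⟨⋃ stems, ⋂ measure-one sets⟩`. Regularity of `κ` keeps the union of fewer
than `κ` stems small, and `κ`-completeness keeps the intersection in `F`. Directedness gives the
end-extension: a point of some stem `t` outside the stem `s` of `p` lies in the stem of a common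
extension of both conditions, so it lies above `s` and inside the measure-one set of `p`.
-/

open Cardinal Set

/-- `F` is a `κ`-complete proper filter (on the whole underlying set): it is nontrivial
and closed under intersections of families of fewer than `κ` of its members. -/
def IsKappaCompleteProperFilter {α : Type} (κ : Cardinal.{0}) (F : Filter α) : Prop :=
  F.NeBot ∧
  ∀ (ι : Type) (g : ι → Set α), #ι < κ → (∀ i, g i ∈ F) → (⋂ i, g i) ∈ F

/-- `p = ⟨s, A⟩` is a condition in the long Prikry poset `Q_F`:
the stem `s` has size less than `κ` and `A ∈ F`. -/
def IsLongPrikryCond {α : Type} (κ : Cardinal.{0}) (F : Filter α)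
    (p : Set α × Set α) : Prop :=
  #p.1 < κ ∧ p.2 ∈ F

/-- The long Prikry ordering: `⟨s,A⟩ ≤ ⟨t,B⟩` iff `s` end-extends `t`,
`A ⊆ B`, and `s ∖ t ⊆ B`. -/
def LongPrikryLE {α : Type} [LinearOrder α] (p q : Set α × Set α) : Prop :=
  q.1 ⊆ p.1 ∧ (∀ x ∈ p.1, x ∉ q.1 → ∀ y ∈ q.1, y < x) ∧ p.2 ⊆ q.2 ∧ p.1 \ q.1 ⊆ q.2

section LongPrikryOrder

variable {α : Type} [LinearOrder α]

theorem LongPrikryLE.mem_of_common_extension {r p q : Set α × Set α}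
    (hrp : LongPrikryLE r p) (hrq : LongPrikryLE r q) {x : α} (hxq : x ∈ q.1) (hxp : x ∉ p.1) :
    (∀ y ∈ p.1, y < x) ∧ x ∈ p.2 :=
  ⟨hrp.2.1 x (hrq.1 hxq) hxp, hrp.2.2.2 ⟨hrq.1 hxq, hxp⟩⟩

theorem longPrikryLE_iUnion_iInter {D : Set (Set α × Set α)}
    (hdir : ∀ p ∈ D, ∀ q ∈ D, ∃ r, LongPrikryLE r p ∧ LongPrikryLE r q)
    {p : Set α × Set α} (hp : p ∈ D) :
    LongPrikryLE (⋃ q : D, q.1.1, ⋂ q : D, q.1.2) p := by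
  have outside : ∀ x ∈ ⋃ q : D, q.1.1, x ∉ p.1 → (∀ y ∈ p.1, y < x) ∧ x ∈ p.2 := by
    intro x hx hxp
    obtain ⟨⟨q, hq⟩, hxq⟩ := mem_iUnion.1 hx
    obtain ⟨r, hrp, hrq⟩ := hdir p hp q hq
    exact hrp.mem_of_common_extension hrq hxq hxp
  exact ⟨subset_iUnion_of_subset ⟨p, hp⟩ subset_rfl, fun x hx hxp ↦ (outside x hx hxp).1,
    iInter_subset_of_subset ⟨p, hp⟩ subset_rfl, fun x hx ↦ (outside x hx.1 hx.2).2⟩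

end LongPrikryOrder

theorem isLongPrikryCond_iUnion_iInter {α : Type} {κ : Cardinal.{0}} (hreg : κ.IsRegular)
    {F : Filter α} (hF : IsKappaCompleteProperFilter κ F) {D : Set (Set α × Set α)}
    (hD : ∀ p ∈ D, IsLongPrikryCond κ F p) (hsize : #D < κ) :
    IsLongPrikryCond κ F (⋃ q : D, q.1.1, ⋂ q : D, q.1.2) :=
  ⟨(card_iUnion_lt_iff_forall_of_isRegular hreg hsize).2 fun q ↦ (hD q q.2).1,
    hF.2 D _ hsize fun q ↦ (hD q q.2).2⟩

theorem long_prikry_directed_closed_general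
    (κ : Cardinal.{0}) (hreg : κ.IsRegular)
    (F : Filter κ.ord.ToType) (hF : IsKappaCompleteProperFilter κ F)
    (D : Set (Set κ.ord.ToType × Set κ.ord.ToType))
    (hD : ∀ p ∈ D, IsLongPrikryCond κ F p)
    (hdir : ∀ p ∈ D, ∀ q ∈ D, ∃ r ∈ D, LongPrikryLE r p ∧ LongPrikryLE r q)
    (hsize : #D < κ) :
    ∃ r, IsLongPrikryCond κ F r ∧ ∀ p ∈ D, LongPrikryLE r p :=
  ⟨_, isLongPrikryCond_iUnion_iInter hreg hF hD hsize,
    fun _ hp ↦ longPrikryLE_iUnion_iInter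
      (fun p hp q hq ↦ (hdir p hp q hq).imp fun _ hr ↦ hr.2) hp⟩

/-- For a regular uncountable cardinal `κ` (viewed as the linearly ordered type
`κ.ord.toType`) and a `κ`-complete proper filter `F` on `κ`, the long Prikry poset
`Q_F` is `<κ`-directed closed: every downward-directed set of conditions of size
less than `κ` has a lower bound in `Q_F`. -/
theorem long_prikry_directed_closed
    (κ : Cardinal.{0}) (hreg : κ.IsRegular) (hunc : ℵ₀ < κ)
    (F : Filter κ.ord.ToType) (hF : IsKappaCompleteProperFilter κ F)
    (D : Set (Set κ.ord.ToType × Set κ.ord.ToType))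
    (hD : ∀ p ∈ D, IsLongPrikryCond κ F p)
    (hdir : ∀ p ∈ D, ∀ q ∈ D, ∃ r ∈ D, LongPrikryLE r p ∧ LongPrikryLE r q)
    (hsize : #D < κ) :
    ∃ r, IsLongPrikryCond κ F r ∧ ∀ p ∈ D, LongPrikryLE r p :=
  long_prikry_directed_closed_general κ hreg F hF D hD hdir hsize
end

section
/- Let κ be a regular uncountable cardinal and let λ and θ be cardinals with κ ≤ λ ≤ θ and cf(θ) ≥ κ. If μ is a fine κ-complete ultrafilter on P_κλ and η is a fine κ-complete ultrafilter on P_κθ, then the product ultrafilter μ × η on P_κλ × P_κθ is isomorphic to a fine κ-complete ultrafilter on P_κθ. -/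
open Cardinal Set

/-- `P_κ X`: the collection of subsets of `X` of size less than `κ` (as a type). -/
abbrev PKappa (κ : Cardinal.{0}) (X : Type) : Type := {s : Set X // #s < κ}

/-- An ultrafilter on `P_κ X` is fine if for each `x ∈ X` the collection of sets
containing `x` is large. -/
def FineUF {X : Type} (κ : Cardinal.{0}) (U : Ultrafilter (PKappa κ X)) : Prop :=
  ∀ x : X, {s : PKappa κ X | x ∈ s.1} ∈ U

/-- An ultrafilter is `κ`-complete if it is closed under intersections of families
of fewer than `κ` of its members. -/
def KappaCompleteUF {A : Type} (κ : Cardinal.{0}) (U : Ultrafilter A) : Prop :=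
  ∀ (ι : Type) (g : ι → Set A), #ι < κ → (∀ i, g i ∈ U) → (⋂ i, g i) ∈ U

/-- Two ultrafilters are isomorphic when there are large sets `S ∈ U`, `T ∈ V` and a
bijection `g : S → T` such that for every `Z ⊆ S`, `Z ∈ U` iff `g '' Z ∈ V`. -/
def UFIso {A B : Type} (U : Ultrafilter A) (V : Ultrafilter B) : Prop :=
  ∃ (S : Set A) (T : Set B) (g : A → B), S ∈ U ∧ T ∈ V ∧ Set.BijOn g S T ∧
    ∀ Z ⊆ S, (Z ∈ U ↔ g '' Z ∈ V)

/-!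
Since `κ ≤ λ ≤ θ` and `θ` is infinite, a bijection `λ ⊔ θ ≃ θ` induces
`P_κλ × P_κθ ≃ P_κ(λ ⊔ θ) ≃ P_κθ`, sending `(a, b)` to the image of the disjoint union of `a`
and `b`. The image of `μ × η` under this bijection is isomorphic to `μ × η` by construction,
it is `κ`-complete because `μ × η` is, and it is fine because `μ` and `η` are.
-/

namespace PKappa

variable {κ : Cardinal.{0}} {X Y : Type}

def congr (e : X ≃ Y) : PKappa κ X ≃ PKappa κ Y where
  toFun s := ⟨e '' s.1, by rw [mk_image_eq e.injective]; exact s.2⟩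
  invFun t := ⟨e.symm '' t.1, by rw [mk_image_eq e.symm.injective]; exact t.2⟩
  left_inv s := Subtype.ext (e.symm_image_image s.1)
  right_inv t := Subtype.ext (e.image_symm_image t.1)

lemma mem_congr_iff (e : X ≃ Y) (s : PKappa κ X) (y : Y) :
    y ∈ (congr e s).1 ↔ e.symm y ∈ s.1 := by
  simp [congr, e.image_eq_preimage_symm]

def sumEquiv (hκ : ℵ₀ ≤ κ) : PKappa κ X × PKappa κ Y ≃ PKappa κ (X ⊕ Y) where
  toFun p := ⟨Sum.inl '' p.1.1 ∪ Sum.inr '' p.2.1, by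
    refine (mk_union_le _ _).trans_lt ?_
    rw [mk_image_eq Sum.inl_injective, mk_image_eq Sum.inr_injective]
    exact add_lt_of_lt hκ p.1.2 p.2.2⟩
  invFun s :=
    (⟨Sum.inl ⁻¹' s.1, (mk_preimage_of_injective _ _ Sum.inl_injective).trans_lt s.2⟩,
      ⟨Sum.inr ⁻¹' s.1, (mk_preimage_of_injective _ _ Sum.inr_injective).trans_lt s.2⟩)
  left_inv p := by ext <;> simp
  right_inv s := by ext (x | y) <;> simp

@[simp]
lemma inl_mem_sumEquiv_iff (hκ : ℵ₀ ≤ κ) (p : PKappa κ X × PKappa κ Y) (x : X) :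
    Sum.inl x ∈ (sumEquiv hκ p).1 ↔ x ∈ p.1.1 := by
  simp [sumEquiv]

@[simp]
lemma inr_mem_sumEquiv_iff (hκ : ℵ₀ ≤ κ) (p : PKappa κ X × PKappa κ Y) (y : Y) :
    Sum.inr y ∈ (sumEquiv hκ p).1 ↔ y ∈ p.2.1 := by
  simp [sumEquiv]

end PKappa

section Ultrafilters

variable {A B : Type} {κ : Cardinal.{0}}

def IsProductUF (W : Ultrafilter (A × B)) (U : Ultrafilter A) (V : Ultrafilter B) : Prop :=
  ∀ s : Set (A × B), s ∈ W ↔ {a : A | {b : B | (a, b) ∈ s} ∈ V} ∈ U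

namespace IsProductUF

variable {W : Ultrafilter (A × B)} {U : Ultrafilter A} {V : Ultrafilter B}

lemma preimage_fst_mem (hW : IsProductUF W U V) {s : Set A} (hs : s ∈ U) :
    Prod.fst ⁻¹' s ∈ W :=
  (hW _).2 <| Filter.mem_of_superset hs fun _ ha =>
    Filter.mem_of_superset Filter.univ_mem fun _ _ => ha

lemma preimage_snd_mem (hW : IsProductUF W U V) {t : Set B} (ht : t ∈ V) :
    Prod.snd ⁻¹' t ∈ W :=
  (hW _).2 <| Filter.mem_of_superset Filter.univ_mem fun _ _ => ht

lemma kappaCompleteUF (hW : IsProductUF W U V) (hU : KappaCompleteUF κ U)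
    (hV : KappaCompleteUF κ V) : KappaCompleteUF κ W := by
  intro ι s hι hs
  refine (hW _).2 <| Filter.mem_of_superset (hU ι _ hι fun i => (hW _).1 (hs i)) fun a ha => ?_
  have hsection : {b | (a, b) ∈ ⋂ i, s i} = ⋂ i, {b | (a, b) ∈ s i} := by ext; simp
  rw [mem_ofPred_eq, hsection]
  exact hV ι _ hι (mem_iInter.1 ha)

end IsProductUF

lemma KappaCompleteUF.map {U : Ultrafilter A} (hU : KappaCompleteUF κ U) (f : A → B) :
    KappaCompleteUF κ (U.map f) := by
  intro ι t hι ht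
  rw [Ultrafilter.mem_map, preimage_iInter]
  exact hU ι _ hι fun i => Ultrafilter.mem_map.1 (ht i)

lemma FineUF.map_congr {X Y : Type} {U : Ultrafilter (PKappa κ X)} (hU : FineUF κ U)
    (e : X ≃ Y) : FineUF κ (U.map (PKappa.congr e)) := fun y =>
  Ultrafilter.mem_map.2 <| Filter.mem_of_superset (hU (e.symm y)) fun _ hs =>
    (PKappa.mem_congr_iff e _ y).2 hs

lemma IsProductUF.fineUF_map_sumEquiv {X Y : Type} {W : Ultrafilter (PKappa κ X × PKappa κ Y)}
    {U : Ultrafilter (PKappa κ X)} {V : Ultrafilter (PKappa κ Y)} (hW : IsProductUF W U V)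
    (hU : FineUF κ U) (hV : FineUF κ V) (hκ : ℵ₀ ≤ κ) :
    FineUF κ (W.map (PKappa.sumEquiv hκ)) := by
  rintro (x | y) <;> rw [Ultrafilter.mem_map]
  · simpa using hW.preimage_fst_mem (hU x)
  · simpa using hW.preimage_snd_mem (hV y)

lemma UFIso.map_equiv (U : Ultrafilter A) (g : A ≃ B) : UFIso U (U.map g) :=
  ⟨univ, univ, g, Filter.univ_mem, Filter.univ_mem, g.bijective.bijOn_univ, fun Z _ => by
    rw [Ultrafilter.mem_map, g.preimage_image]⟩

end Ultrafilters

theorem product_fine_measure_iso_general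
    (κ lam θ : Cardinal.{0}) (hunc : ℵ₀ < κ)
    (hκlam : κ ≤ lam) (hlamθ : lam ≤ θ)
    (X Y : Type) (hX : #X = lam) (hY : #Y = θ)
    (μ : Ultrafilter (PKappa κ X)) (hμfine : FineUF κ μ) (hμcomp : KappaCompleteUF κ μ)
    (η : Ultrafilter (PKappa κ Y)) (hηfine : FineUF κ η) (hηcomp : KappaCompleteUF κ η)
    (W : Ultrafilter (PKappa κ X × PKappa κ Y))
    (hW : ∀ s : Set (PKappa κ X × PKappa κ Y),
      s ∈ W ↔ {a : PKappa κ X | {b : PKappa κ Y | (a, b) ∈ s} ∈ η} ∈ μ) :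
    ∃ ν : Ultrafilter (PKappa κ Y), FineUF κ ν ∧ KappaCompleteUF κ ν ∧ UFIso W ν := by
  have hW : IsProductUF W μ η := hW
  have hθ : ℵ₀ ≤ θ := hunc.le.trans (hκlam.trans hlamθ)
  obtain ⟨e⟩ : Nonempty (X ⊕ Y ≃ Y) := Cardinal.eq.1 <| by
    rw [mk_sum, lift_id, lift_id, hX, hY]
    exact add_eq_right hθ hlamθ
  let g := (PKappa.sumEquiv hunc.le).trans (PKappa.congr e)
  refine ⟨W.map g, ?_, (hW.kappaCompleteUF hμcomp hηcomp).map g, UFIso.map_equiv W g⟩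
  rw [Equiv.coe_trans, ← Ultrafilter.map_map]
  exact (hW.fineUF_map_sumEquiv hμfine hηfine hunc.le).map_congr e

/-- If `κ ≤ λ ≤ θ`, `cf(θ) ≥ κ`, `μ` is a fine `κ`-complete ultrafilter on `P_κ λ`
and `η` is a fine `κ`-complete ultrafilter on `P_κ θ`, then the product ultrafilter
`μ × η` (characterized by `W ∈ μ × η ↔ {a | {b | (a,b) ∈ W} ∈ η} ∈ μ`) is isomorphic
to a fine `κ`-complete ultrafilter on `P_κ θ`.  (The underlying sets `λ` and `θ` are
represented by types `X` and `Y` of those cardinalities.) -/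
theorem product_fine_measure_iso
    (κ lam θ : Cardinal.{0}) (hreg : κ.IsRegular) (hunc : ℵ₀ < κ)
    (hκlam : κ ≤ lam) (hlamθ : lam ≤ θ) (hcof : κ ≤ θ.ord.cof)
    (X Y : Type) (hX : #X = lam) (hY : #Y = θ)
    (μ : Ultrafilter (PKappa κ X)) (hμfine : FineUF κ μ) (hμcomp : KappaCompleteUF κ μ)
    (η : Ultrafilter (PKappa κ Y)) (hηfine : FineUF κ η) (hηcomp : KappaCompleteUF κ η)
    (W : Ultrafilter (PKappa κ X × PKappa κ Y))
    (hW : ∀ s : Set (PKappa κ X × PKappa κ Y),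
      s ∈ W ↔ {a : PKappa κ X | {b : PKappa κ Y | (a, b) ∈ s} ∈ η} ∈ μ) :
    ∃ ν : Ultrafilter (PKappa κ Y), FineUF κ ν ∧ KappaCompleteUF κ ν ∧ UFIso W ν :=
  product_fine_measure_iso_general κ lam θ hunc hκlam hlamθ X Y hX hY μ hμfine hμcomp η hηfine
    hηcomp W hW
end
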